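/- arXiv:2408.06343 — 2 statements merged into one kernel-verified Lean document; each statement's English description precedes it below -/
import Mathlib

section
/- Let A and B be n×n positive definite complex matrices. Then the Riccati equation X A⁻¹ X = B has a unique positive definite solution, namely the geometric mean X = A # B = A^{1/2}(A^{-1/2} B A^{-1/2})^{1/2} A^{1/2}. -/
/-!
Write `S = A^{1/2}`. The congruence `X ↦ S X S` is a bijection of the positive definite matrices
onto themselves, and it turns the Riccati equation for `X = S Y S` into `Y² = S⁻¹ B S⁻¹`, since
`S Y S (S S)⁻¹ S Y S = S Y² S`. By uniqueness of the positive square root, the only positive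
definite solution is `Y = (S⁻¹ B S⁻¹)^{1/2}`, i.e. `X = A # B`.
-/

open Matrix
open scoped ComplexOrder

variable {n : Type*} [Fintype n] [DecidableEq n]

/-- The unique positive semidefinite square root of a positive (semi)definite matrix,
obtained by applying `Real.sqrt` via the spectral (continuous) functional calculus. -/
noncomputable def msqrt (M : Matrix n n ℂ) : Matrix n n ℂ := cfc Real.sqrt M

/-- The geometric mean `A # B = A^{1/2} (A^{-1/2} B A^{-1/2})^{1/2} A^{1/2}`. -/
noncomputable def geomMean (A B : Matrix n n ℂ) : Matrix n n ℂ :=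
  msqrt A * msqrt ((msqrt A)⁻¹ * B * (msqrt A)⁻¹) * msqrt A

namespace Matrix

theorem IsHermitian.posDef_mul_mul_iff {R : Type*} [Ring R] [PartialOrder R] [StarRing R]
    {S M : Matrix n n R} (hS : S.IsHermitian) (hSu : IsUnit S) :
    (S * M * S).PosDef ↔ M.PosDef := by
  simpa only [star_eq_conjTranspose, hS.eq] using hSu.posDef_star_left_conjugate_iff

variable {R : Type*} [CommRing R] {S M B : Matrix n n R}

theorem mul_mul_eq_iff_eq_nonsing_inv_mul_mul (hS : IsUnit S) :
    S * M * S = B ↔ M = S⁻¹ * B * S⁻¹ := by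
  have hS' : IsUnit S.det := (isUnit_iff_isUnit_det S).mp hS
  constructor
  · rintro rfl
    simp only [mul_assoc, nonsing_inv_mul_cancel_left _ _ hS', mul_nonsing_inv _ hS', mul_one]
  · rintro rfl
    simp only [mul_assoc, mul_nonsing_inv_cancel_left _ _ hS', nonsing_inv_mul _ hS', mul_one]

theorem riccati_mul_mul_iff (hS : IsUnit S) (Y : Matrix n n R) :
    S * Y * S * (S * S)⁻¹ * (S * Y * S) = B ↔ Y * Y = S⁻¹ * B * S⁻¹ := by
  have hS' : IsUnit S.det := (isUnit_iff_isUnit_det S).mp hS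
  have hcancel : S * Y * S * (S * S)⁻¹ * (S * Y * S) = S * (Y * Y) * S := by
    rw [mul_inv_rev]
    simp only [mul_assoc, mul_nonsing_inv_cancel_left _ _ hS', nonsing_inv_mul_cancel_left _ _ hS']
  rw [hcancel, mul_mul_eq_iff_eq_nonsing_inv_mul_mul hS]

end Matrix

open scoped MatrixOrder in
theorem msqrt_eq_sqrt {M : Matrix n n ℂ} (hM : M.PosSemidef) : msqrt M = CFC.sqrt M := by
  rw [msqrt, CFC.sqrt_eq_real_sqrt M hM.nonneg, cfcₙ_eq_cfc]

open scoped MatrixOrder in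
theorem posDef_msqrt {M : Matrix n n ℂ} (hM : M.PosDef) : (msqrt M).PosDef := by
  rw [msqrt_eq_sqrt hM.posSemidef]
  exact (hM.isStrictlyPositive.sqrt M).posDef

open scoped MatrixOrder in
theorem msqrt_mul_msqrt {M : Matrix n n ℂ} (hM : M.PosSemidef) : msqrt M * msqrt M = M := by
  rw [msqrt_eq_sqrt hM]
  exact CFC.sqrt_mul_sqrt_self M hM.nonneg

open scoped MatrixOrder in
theorem msqrt_mul_self {Y : Matrix n n ℂ} (hY : Y.PosSemidef) : msqrt (Y * Y) = Y := by
  have hYY : (Y * Y).PosSemidef := by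
    simpa only [hY.isHermitian.eq] using posSemidef_conjTranspose_mul_self Y
  rw [msqrt_eq_sqrt hYY]
  exact CFC.sqrt_mul_self Y hY.nonneg

/-- For positive definite `A` and `B`, the Riccati equation `X A⁻¹ X = B` has a
unique positive definite solution, namely the geometric mean `X = A # B`. -/
theorem riccati_unique_solution (A B : Matrix n n ℂ) (hA : A.PosDef) (hB : B.PosDef) :
    ((geomMean A B).PosDef ∧ geomMean A B * A⁻¹ * geomMean A B = B) ∧
    ∀ X : Matrix n n ℂ, X.PosDef → X * A⁻¹ * X = B → X = geomMean A B := by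
  set S := msqrt A
  have hS : S.PosDef := posDef_msqrt hA
  have hSA : S * S = A := msqrt_mul_msqrt hA.posSemidef
  have posDef_conj_iff {M : Matrix n n ℂ} : (S * M * S).PosDef ↔ M.PosDef :=
    hS.isHermitian.posDef_mul_mul_iff hS.isUnit
  have riccati (Y : Matrix n n ℂ) :
      S * Y * S * A⁻¹ * (S * Y * S) = B ↔ Y * Y = S⁻¹ * B * S⁻¹ :=
    hSA ▸ riccati_mul_mul_iff hS.isUnit Y
  have hC : (S⁻¹ * B * S⁻¹).PosDef :=
    (hS.inv.isHermitian.posDef_mul_mul_iff hS.inv.isUnit).mpr hB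
  refine ⟨⟨posDef_conj_iff.mpr (posDef_msqrt hC),
    (riccati _).mpr (msqrt_mul_msqrt hC.posSemidef)⟩, fun X hX hXB => ?_⟩
  obtain ⟨Y, rfl⟩ : ∃ Y, X = S * Y * S :=
    ⟨S⁻¹ * X * S⁻¹, ((mul_mul_eq_iff_eq_nonsing_inv_mul_mul hS.isUnit).mpr rfl).symm⟩
  rw [geomMean, ← (riccati Y).mp hXB, msqrt_mul_self (posDef_conj_iff.mp hX).posSemidef]
end

section
/- For any n×n positive definite complex matrices A and B, B^{1/2}(B^{1/2} A B^{1/2})^{1/2} B^{-1/2} = A^{-1/2}(A^{1/2} B A^{1/2})^{1/2} A^{1/2}; consequently this matrix is a square root of BA, i.e. its square equals BA. -/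
/-!
Write `a = A^{1/2}`, `b = B^{1/2}` and `C = a b`, so that `Cᴴ C = b A b` and `C Cᴴ = a B a`.
For injective `C` the matrix `C (Cᴴ C)^{-1/2} Cᴴ` is positive semidefinite and squares to
`C Cᴴ`, hence `(a B a)^{1/2} = a b (b A b)^{-1/2} b a`. Substituting this, both sides of the
identity reduce to `b (b A b)^{-1/2} b A`, and `b (b A b)^{1/2} b⁻¹` squares to
`b (b A b) b⁻¹ = B A`.
-/

open Matrix
open scoped ComplexOrder

variable {n : Type*} [Fintype n] [DecidableEq n]

open scoped MatrixOrder

namespace Matrix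

theorem PosSemidef.msqrt_eq_sqrt {M : Matrix n n ℂ} (hM : M.PosSemidef) :
    msqrt M = CFC.sqrt M := by
  rw [msqrt, CFC.sqrt_eq_real_sqrt M hM.nonneg, cfcₙ_eq_cfc]

theorem PosSemidef.msqrt_mul_self {M : Matrix n n ℂ} (hM : M.PosSemidef) :
    msqrt M * msqrt M = M := by
  rw [hM.msqrt_eq_sqrt]
  exact CFC.sqrt_mul_sqrt_self M hM.nonneg

theorem PosSemidef.msqrt_eq_of_mul_self {M T : Matrix n n ℂ} (hM : M.PosSemidef)
    (hT : T.PosSemidef) (h : T * T = M) : msqrt M = T := by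
  rw [hM.msqrt_eq_sqrt]
  exact CFC.sqrt_unique h hT.nonneg

theorem PosDef.msqrt {M : Matrix n n ℂ} (hM : M.PosDef) : (msqrt M).PosDef := by
  rw [hM.posSemidef.msqrt_eq_sqrt]
  exact hM.isStrictlyPositive.sqrt.posDef

theorem msqrt_mul_conjTranspose_self {m : Type*} [Fintype m] [DecidableEq m]
    {C : Matrix m n ℂ} (hC : Function.Injective C.mulVec) :
    msqrt (C * Cᴴ) = C * (msqrt (Cᴴ * C))⁻¹ * Cᴴ := by
  have hCC := PosDef.conjTranspose_mul_self C hC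
  have hss := hCC.posSemidef.msqrt_mul_self
  have hs := hCC.msqrt
  set s := msqrt (Cᴴ * C)
  have hs_det : IsUnit s.det := (isUnit_iff_isUnit_det s).mp hs.isUnit
  refine (posSemidef_self_mul_conjTranspose C).msqrt_eq_of_mul_self
    (hs.posSemidef.inv.mul_mul_conjTranspose_same C) ?_
  calc C * s⁻¹ * Cᴴ * (C * s⁻¹ * Cᴴ) = C * (s⁻¹ * (s * s) * s⁻¹) * Cᴴ := by
        rw [hss]; simp only [Matrix.mul_assoc]
    _ = C * Cᴴ := by
        rw [nonsing_inv_mul_cancel_left s s hs_det, mul_nonsing_inv s hs_det, Matrix.mul_one]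

end Matrix

/-- For positive definite matrices `A` and `B`,
`B^{1/2}(B^{1/2} A B^{1/2})^{1/2} B^{-1/2} = A^{-1/2}(A^{1/2} B A^{1/2})^{1/2} A^{1/2}`, and this
matrix is a square root of `BA`, i.e. its square equals `B * A`. -/
theorem sqrt_of_BA (A B : Matrix n n ℂ) (hA : A.PosDef) (hB : B.PosDef) :
    msqrt B * msqrt (msqrt B * A * msqrt B) * (msqrt B)⁻¹ =
      (msqrt A)⁻¹ * msqrt (msqrt A * B * msqrt A) * msqrt A ∧
    (msqrt B * msqrt (msqrt B * A * msqrt B) * (msqrt B)⁻¹) ^ 2 = B * A := by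
  set a := msqrt A
  set b := msqrt B
  have ha : a.PosDef := hA.msqrt
  have hb : b.PosDef := hB.msqrt
  have hAa : a * a = A := hA.posSemidef.msqrt_mul_self
  have hBb : b * b = B := hB.posSemidef.msqrt_mul_self
  have ha_det : IsUnit a.det := (isUnit_iff_isUnit_det a).mp ha.isUnit
  have hb_det : IsUnit b.det := (isUnit_iff_isUnit_det b).mp hb.isUnit
  have hpolar :=
    msqrt_mul_conjTranspose_self (mulVec_injective_iff_isUnit.mpr (ha.isUnit.mul hb.isUnit))
  rw [conjTranspose_mul, ha.isHermitian.eq, hb.isHermitian.eq,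
    show a * b * (b * a) = a * B * a by rw [← hBb]; simp only [Matrix.mul_assoc],
    show b * a * (a * b) = b * A * b by rw [← hAa]; simp only [Matrix.mul_assoc]] at hpolar
  have hbAb : (b * A * b).PosDef := by
    simpa only [hb.isHermitian.eq] using
      hA.conjTranspose_mul_mul_same (mulVec_injective_iff_isUnit.mpr hb.isUnit)
  have hss := hbAb.posSemidef.msqrt_mul_self
  have hs_det := (isUnit_iff_isUnit_det _).mp hbAb.msqrt.isUnit
  set s := msqrt (b * A * b)
  refine ⟨?_, ?_⟩
  · calc b * s * b⁻¹ = b * s⁻¹ * (s * s) * b⁻¹ := by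
          rw [Matrix.mul_assoc b s⁻¹, nonsing_inv_mul_cancel_left s s hs_det]
      _ = b * s⁻¹ * b * (a * a) := by
          rw [hss, ← hAa]; simp only [Matrix.mul_assoc, mul_nonsing_inv b hb_det, Matrix.mul_one]
      _ = a⁻¹ * msqrt (a * B * a) * a := by
          rw [hpolar]; simp only [Matrix.mul_assoc, nonsing_inv_mul_cancel_left a _ ha_det]
  · calc (b * s * b⁻¹) ^ 2 = b * (s * s) * b⁻¹ := by
          rw [sq]; simp only [Matrix.mul_assoc, nonsing_inv_mul_cancel_left b _ hb_det]
      _ = B * A := by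
          rw [hss, ← hBb]; simp only [Matrix.mul_assoc, mul_nonsing_inv b hb_det, Matrix.mul_one]
end
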